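/- Let n ≥ 2, let α > 1, let a ∈ ℝ, let w : {1,…,n} → ℝ be nonnegative weights with Σ_{i=1}^n w_i = 1, and let ψ : {1,…,n} → ℝ satisfy |ψ(r+1) − ψ(r)| ≤ C·r^{−α} for all integers 1 ≤ r ≤ n−1, where C ≥ 0. For each permutation π of {1,…,n} define q_π = σ(a + Σ_{i=1}^n w_i·ψ(π(i))), and let q̄ be the average of q_π over all n! permutations. Then E_π|q_π − q̄| ≤ (C/4)·ζ(α), a bound independent of n, where ζ is the Riemann zeta function and the expectation is the uniform average over all permutations. -/

import Mathlib

/-- The Riemann zeta function for real argument, `ζ(α) = ∑_{t=1}^∞ t^{−α}` (converges for `α > 1`). -/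
noncomputable def zetaR (α : ℝ) : ℝ := ∑' t : ℕ, ((t : ℝ) + 1) ^ (-α)

/-- The logistic (sigmoid) function `σ(t) = 1 / (1 + e^{-t})`. -/
noncomputable def logistic (t : ℝ) : ℝ := 1 / (1 + Real.exp (-t))

/-- The prediction under permutation `π`: `q_π = σ(a + ∑_i w_i·ψ(pos_π(i)))`, where the
position of chunk `i` in `{1,…,n}` is encoded as `(π i : ℕ) + 1`. -/
noncomputable def qperm (n : ℕ) (a : ℝ) (w : Fin n → ℝ) (ψ : ℕ → ℝ)
    (π : Equiv.Perm (Fin n)) : ℝ :=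
  logistic (a + ∑ i : Fin n, w i * ψ ((π i : ℕ) + 1))

/-!
The logistic function is `1/4`-Lipschitz, since its derivative `σ(1 - σ)` is at most `1/4`.
For `(α, C)`-regular `ψ`, telescoping gives `|ψ s - ψ r| ≤ C ∑_{t ≥ 1} t^{-α} = C ζ(α)` for any
two positions `r, s ∈ {1, …, n}`. As the weights form a probability vector, permuting the chunks
moves the potential `∑ wᵢ ψ(π(i))` by at most `C ζ(α)`, so any two predictions `q_π, q_π'` differ
by at most `(C/4) ζ(α)`, and this pairwise bound also bounds the mean absolute deviation.
-/

open Finset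

theorem logistic_eq_sigmoid : logistic = Real.sigmoid := by
  funext t
  rw [logistic, Real.sigmoid_def, one_div]

theorem Real.lipschitzWith_sigmoid : LipschitzWith 4⁻¹ Real.sigmoid := by
  refine lipschitzWith_of_nnnorm_deriv_le differentiable_sigmoid fun x => ?_
  rw [← NNReal.coe_le_coe, coe_nnnorm, Real.deriv_sigmoid, Real.norm_eq_abs,
    abs_of_nonneg (mul_nonneg (Real.sigmoid_nonneg x) (sub_nonneg.2 (Real.sigmoid_le_one x)))]
  push_cast
  nlinarith [sq_nonneg (Real.sigmoid x - 2⁻¹)]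

theorem abs_logistic_sub_logistic_le (x y : ℝ) :
    |logistic x - logistic y| ≤ |x - y| / 4 := by
  have := Real.lipschitzWith_sigmoid.dist_le_mul x y
  rw [Real.dist_eq, Real.dist_eq, NNReal.coe_inv, NNReal.coe_ofNat] at this
  rw [logistic_eq_sigmoid]
  linarith

theorem sum_Ico_rpow_neg_le_zetaR {α : ℝ} (hα : 1 < α) {r : ℕ} (hr : 1 ≤ r) (s : ℕ) :
    ∑ t ∈ Ico r s, (t : ℝ) ^ (-α) ≤ zetaR α := by
  have hsum : Summable fun t : ℕ => ((t : ℝ) + 1) ^ (-α) := by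
    simpa using (summable_nat_add_iff 1).2 (Real.summable_nat_rpow.2 (neg_lt_neg hα))
  rw [sum_Ico_eq_sum_range]
  calc ∑ k ∈ range (s - r), ((r + k : ℕ) : ℝ) ^ (-α)
      ≤ ∑ k ∈ range (s - r), ((k : ℝ) + 1) ^ (-α) := by
        refine sum_le_sum fun k _ => ?_
        refine Real.rpow_le_rpow_of_nonpos (by positivity : (0 : ℝ) < k + 1) ?_ (by linarith)
        push_cast
        linarith [(Nat.one_le_cast (α := ℝ)).2 hr]
    _ ≤ zetaR α := hsum.sum_le_tsum _ fun k _ => by positivity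

section Regular

variable {n : ℕ} {α C : ℝ} {ψ : ℕ → ℝ}

theorem abs_sub_le_of_regular_of_le (hα : 1 < α) (hC : 0 ≤ C)
    (hreg : ∀ r : ℕ, 1 ≤ r → r ≤ n - 1 → |ψ (r + 1) - ψ r| ≤ C * (r : ℝ) ^ (-α))
    {r s : ℕ} (hr : 1 ≤ r) (hrs : r ≤ s) (hs : s ≤ n) :
    |ψ s - ψ r| ≤ C * zetaR α := by
  have hstep : ∀ {t}, r ≤ t → t < s → dist (ψ t) (ψ (t + 1)) ≤ C * (t : ℝ) ^ (-α) :=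
    fun ht hts => by rw [dist_comm, Real.dist_eq]; exact hreg _ (hr.trans ht) (by omega)
  rw [← Real.dist_eq, dist_comm]
  calc dist (ψ r) (ψ s) ≤ ∑ t ∈ Ico r s, C * (t : ℝ) ^ (-α) :=
        dist_le_Ico_sum_of_dist_le hrs hstep
    _ = C * ∑ t ∈ Ico r s, (t : ℝ) ^ (-α) := (mul_sum ..).symm
    _ ≤ C * zetaR α := mul_le_mul_of_nonneg_left (sum_Ico_rpow_neg_le_zetaR hα hr s) hC

theorem abs_sub_le_of_regular (hα : 1 < α) (hC : 0 ≤ C)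
    (hreg : ∀ r : ℕ, 1 ≤ r → r ≤ n - 1 → |ψ (r + 1) - ψ r| ≤ C * (r : ℝ) ^ (-α))
    {r s : ℕ} (hr : 1 ≤ r) (hrn : r ≤ n) (hs : 1 ≤ s) (hsn : s ≤ n) :
    |ψ s - ψ r| ≤ C * zetaR α := by
  rcases le_total r s with hrs | hsr
  · exact abs_sub_le_of_regular_of_le hα hC hreg hr hrs hsn
  · rw [abs_sub_comm]
    exact abs_sub_le_of_regular_of_le hα hC hreg hs hsr hrn

end Regular

theorem abs_sum_mul_le_of_abs_le {ι : Type*} (s : Finset ι) {w x : ι → ℝ} {D : ℝ}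
    (hw : ∀ i ∈ s, 0 ≤ w i) (hx : ∀ i ∈ s, |x i| ≤ D) :
    |∑ i ∈ s, w i * x i| ≤ (∑ i ∈ s, w i) * D := by
  rw [sum_mul]
  refine (abs_sum_le_sum_abs _ _).trans (sum_le_sum fun i hi => ?_)
  rw [abs_mul, abs_of_nonneg (hw i hi)]
  exact mul_le_mul_of_nonneg_left (hx i hi) (hw i hi)

section Average

variable {ι : Type*} [Fintype ι] [Nonempty ι] {f : ι → ℝ} {B : ℝ}

theorem inv_card_mul_sum_le (h : ∀ i, f i ≤ B) :
    1 / (Fintype.card ι : ℝ) * ∑ i, f i ≤ B := by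
  rw [one_div, inv_mul_le_iff₀ (by positivity)]
  simpa using sum_le_card_nsmul univ f B fun i _ => h i

theorem abs_sub_average_le {i : ι} (h : ∀ j, |f i - f j| ≤ B) :
    |f i - 1 / (Fintype.card ι : ℝ) * ∑ j, f j| ≤ B := by
  have hcard : (0 : ℝ) < Fintype.card ι := by positivity
  have hmean : f i - 1 / (Fintype.card ι : ℝ) * ∑ j, f j
      = 1 / (Fintype.card ι : ℝ) * ∑ j, (f i - f j) := by
    rw [sum_sub_distrib, sum_const, card_univ, nsmul_eq_mul]
    field_simp
  rw [hmean, abs_mul, abs_of_pos (by positivity)]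
  exact (mul_le_mul_of_nonneg_left (abs_sum_le_sum_abs _ _) (by positivity)).trans
    (inv_card_mul_sum_le h)

theorem mean_abs_sub_average_le (h : ∀ i j, |f i - f j| ≤ B) :
    1 / (Fintype.card ι : ℝ) * ∑ i, |f i - 1 / (Fintype.card ι : ℝ) * ∑ j, f j| ≤ B :=
  inv_card_mul_sum_le fun i => abs_sub_average_le (h i)

end Average

theorem abs_qperm_sub_qperm_le {n : ℕ} {α : ℝ} (hα : 1 < α) (a : ℝ) {C : ℝ} (hC : 0 ≤ C)
    {w : Fin n → ℝ} (hw0 : ∀ i, 0 ≤ w i) (hw1 : ∑ i, w i = 1) {ψ : ℕ → ℝ}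
    (hreg : ∀ r : ℕ, 1 ≤ r → r ≤ n - 1 → |ψ (r + 1) - ψ r| ≤ C * (r : ℝ) ^ (-α))
    (π π' : Equiv.Perm (Fin n)) :
    |qperm n a w ψ π - qperm n a w ψ π'| ≤ C / 4 * zetaR α := by
  have hpotential : |∑ i, w i * ψ ((π i : ℕ) + 1) - ∑ i, w i * ψ ((π' i : ℕ) + 1)|
      ≤ C * zetaR α := by
    rw [← sum_sub_distrib]
    simp_rw [← mul_sub]
    simpa [hw1] using abs_sum_mul_le_of_abs_le univ (fun i _ => hw0 i) fun i _ =>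
      abs_sub_le_of_regular hα hC hreg (by omega) (π' i).isLt (by omega) (π i).isLt
  calc |qperm n a w ψ π - qperm n a w ψ π'|
      ≤ |(a + ∑ i, w i * ψ ((π i : ℕ) + 1)) - (a + ∑ i, w i * ψ ((π' i : ℕ) + 1))| / 4 :=
        abs_logistic_sub_logistic_le _ _
    _ ≤ C / 4 * zetaR α := by rw [add_sub_add_left_eq_sub]; linarith

theorem qmv_summable_general (n : ℕ) (α : ℝ) (hα : 1 < α)
    (a : ℝ) (C : ℝ) (hC : 0 ≤ C)
    (w : Fin n → ℝ) (hw0 : ∀ i, 0 ≤ w i) (hw1 : ∑ i, w i = 1) (ψ : ℕ → ℝ)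
    (hreg : ∀ r : ℕ, 1 ≤ r → r ≤ n - 1 → |ψ (r + 1) - ψ r| ≤ C * (r : ℝ) ^ (-α)) :
    (1 / (Nat.factorial n : ℝ)) *
        ∑ π : Equiv.Perm (Fin n),
          |qperm n a w ψ π -
            (1 / (Nat.factorial n : ℝ)) * ∑ π' : Equiv.Perm (Fin n), qperm n a w ψ π'| ≤
      (C / 4) * zetaR α := by
  have hcard : Fintype.card (Equiv.Perm (Fin n)) = n.factorial := by
    rw [Fintype.card_perm, Fintype.card_fin]
  rw [← hcard]
  exact mean_abs_sub_average_le (abs_qperm_sub_qperm_le hα a hC hw0 hw1 hreg)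

/-- **Quantified Martingale Violation, summable decay (α > 1).**
Under the first-order positional sensitivity model with `(α, C)`-regular potential `ψ`,
the permutation-induced dispersion satisfies `E_π|q_π − q̄| ≤ (C/4)·ζ(α)`, a bound independent of `n`. -/
theorem qmv_summable (n : ℕ) (hn : 2 ≤ n) (α : ℝ) (hα : 1 < α)
    (a : ℝ) (C : ℝ) (hC : 0 ≤ C)
    (w : Fin n → ℝ) (hw0 : ∀ i, 0 ≤ w i) (hw1 : ∑ i, w i = 1) (ψ : ℕ → ℝ)
    (hreg : ∀ r : ℕ, 1 ≤ r → r ≤ n - 1 → |ψ (r + 1) - ψ r| ≤ C * (r : ℝ) ^ (-α)) :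
    (1 / (Nat.factorial n : ℝ)) *
        ∑ π : Equiv.Perm (Fin n),
          |qperm n a w ψ π -
            (1 / (Nat.factorial n : ℝ)) * ∑ π' : Equiv.Perm (Fin n), qperm n a w ψ π'| ≤
      (C / 4) * zetaR α :=
  qmv_summable_general n α hα a C hC w hw0 hw1 ψ hreg
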